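/- For n ≥ r ≥ 0, let C be the square matrix over ℚ indexed by W(n,r) whose (w,v) entry is c(w,v) = #{ σ ∈ S_n : λ_{M_v}(σ) = w }. Then c(w,v) ≠ 0 if and only if w ≤ v in W(n,r), and the matrix C is invertible. -/

import Mathlib

open Matroid Set

/-- The rank of a set `X` in a matroid `M`: the largest cardinality of an independent
subset of `X`. -/
noncomputable def matRk {α : Type*} (M : Matroid α) (X : Set α) : ℕ :=
  sSup {k : ℕ | ∃ I : Set α, I ⊆ X ∧ M.Indep I ∧ I.ncard = k}

/-- The set of positions of the ones of a 0-1 word of length `n`. -/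
def ones {n : ℕ} (v : Fin n → Bool) : Finset (Fin n) :=
  Finset.univ.filter (fun i => v i = true)

/-- The order on `W(n,r)`: `v ≤ w` iff `π_k(v) ≤ π_k(w)` for all `k`, where `π_k`
is the position of the `k`-th one. -/
def wordLE {n : ℕ} (v w : Fin n → Bool) : Prop :=
  (ones v).card = (ones w).card ∧
  ∀ (k : ℕ) (hv : k < (ones v).card) (hw : k < (ones w).card),
    (ones v).orderEmbOfFin rfl ⟨k, hv⟩ ≤ (ones w).orderEmbOfFin rfl ⟨k, hw⟩

/-- The flag on `Fin n` determined by a word `w` with `r` ones: `T_r` is everything,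
and `T_{k-1} = { s : s < e_{π_k(w)} }` for `1 ≤ k ≤ r`. -/
def flagOfWord {n : ℕ} (w : Fin n → Bool) (i : ℕ) : Set (Fin n) :=
  if h : i < (ones w).card
    then {s : Fin n | s < (ones w).orderEmbOfFin rfl ⟨i, h⟩} else Set.univ

/-- `λ_M(σ) = w_{M(S_σ)}`: the word of a matroid `M` on `Fin n` relative to the
reordering `σ(e_1) < ⋯ < σ(e_n)` of the ground set. -/
noncomputable def lam {n : ℕ} (M : Matroid (Fin n)) (σ : Equiv.Perm (Fin n)) :
    Fin n → Bool :=
  fun i => decide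
    (matRk M (⇑σ '' {j : Fin n | j < i}) < matRk M (⇑σ '' {j : Fin n | j ≤ i}))

/-!
Write `c_s(i)` (`prefixCount s i`) for the number of elements of `s` among the first `i`
positions. The independent sets of the freedom matroid `M_v` are the sets `I` with `c_I ≤ c_v`
pointwise, `w ≤ v` means `c_v ≤ c_w` pointwise, and `λ_M(σ) = w` means that the `σ`-images of the
initial segments have ranks `c_w`. If `λ_{M_v}(σ) = w`, then `w ≤ v` because every set `X` has
rank at least `c_v(|X|)`, witnessed by the top `c_v(|X|)` elements of `X`. Conversely, for
`w ≤ v` the permutation matching the ones of `w` in order with the ones of `v`, and the zeros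
with the zeros, realizes `w`: the image of the first `i` positions lies below the
`(c_w(i)+1)`-st one of `v`. Hence `C` is triangular for the lexicographic order of the counting
functions, with nonzero diagonal.
-/

noncomputable def prefixCount {n : ℕ} (s : Set (Fin n)) (i : ℕ) : ℕ :=
  open Classical in Nat.count (· ∈ Fin.val '' s) i

theorem Fin.ncard_setOf_val_lt {n i : ℕ} (hi : i ≤ n) : {x : Fin n | (x : ℕ) < i}.ncard = i := by
  have h : {x : Fin n | (x : ℕ) < i} = ↑(Finset.univ.filter fun x : Fin n => (x : ℕ) < i) := by
    simp
  rw [h, Set.ncard_coe_finset, Fin.card_filter_val_lt, min_eq_right hi]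

section prefixCount

open Classical

variable {n : ℕ} {s t : Set (Fin n)}

theorem prefixCount_eq_ncard (s : Set (Fin n)) (i : ℕ) :
    prefixCount s i = (s ∩ {x | (x : ℕ) < i}).ncard := by
  rw [prefixCount, Nat.count_eq_card_filter_range, ← Set.ncard_coe_finset,
    ← Set.ncard_image_of_injective _ Fin.val_injective]
  congr 1
  ext j
  simp only [Finset.coe_filter, Finset.mem_range, Set.mem_image, Set.mem_inter_iff]
  grind

theorem prefixCount_mono (s : Set (Fin n)) : Monotone (prefixCount s) := Nat.count_monotone _

theorem prefixCount_le (s : Set (Fin n)) (i : ℕ) : prefixCount s i ≤ i := Nat.count_le _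

theorem prefixCount_le_ncard (s : Set (Fin n)) (i : ℕ) : prefixCount s i ≤ s.ncard := by
  rw [prefixCount_eq_ncard]
  exact Set.ncard_le_ncard Set.inter_subset_left

theorem prefixCount_of_le {i : ℕ} (hi : n ≤ i) : prefixCount s i = s.ncard := by
  rw [prefixCount_eq_ncard, Set.inter_eq_left.2]
  intro x _
  exact x.2.trans_le hi

theorem prefixCount_le_of_subset (h : s ⊆ t) (i : ℕ) : prefixCount s i ≤ prefixCount t i := by
  rw [prefixCount_eq_ncard, prefixCount_eq_ncard]
  exact Set.ncard_le_ncard (Set.inter_subset_inter_left _ h)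

theorem prefixCount_lt_succ_iff {x : Fin n} :
    prefixCount s x < prefixCount s (x + 1) ↔ x ∈ s := by
  rw [prefixCount, prefixCount, Nat.count_lt_count_succ_iff, Fin.val_injective.mem_set_image]

theorem prefixCount_lt_of_mem {x : Fin n} (hx : x ∈ s) {i : ℕ} (h : (x : ℕ) < i) :
    prefixCount s x < prefixCount s i :=
  Nat.count_strict_mono (Fin.val_injective.mem_set_image.2 hx) h

theorem lt_of_prefixCount_lt {a b : ℕ} (h : prefixCount s a < prefixCount s b) : a < b :=
  Nat.lt_of_count_lt_count h

theorem prefixCount_le_add_sub (s : Set (Fin n)) (i m : ℕ) :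
    prefixCount s m ≤ prefixCount s i + (m - i) := by
  rcases le_total m i with h | h
  · exact (prefixCount_mono s h).trans (Nat.le_add_right _ _)
  · obtain ⟨k, rfl⟩ := Nat.exists_eq_add_of_le h
    rw [prefixCount, prefixCount, Nat.count_add, Nat.add_sub_cancel_left]
    exact Nat.add_le_add_left (Nat.count_le _) _

theorem prefixCount_compl_add {i : ℕ} (hi : i ≤ n) : prefixCount sᶜ i + prefixCount s i = i := by
  have h := Set.ncard_inter_add_ncard_sdiff_eq_ncard {x : Fin n | (x : ℕ) < i} s
  rw [Fin.ncard_setOf_val_lt hi] at h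
  rw [prefixCount_eq_ncard, prefixCount_eq_ncard, Set.inter_comm sᶜ, Set.inter_comm s]
  exact (add_comm _ _).trans h

theorem prefixCount_inter_le_val (s : Set (Fin n)) (a i : ℕ) :
    prefixCount (s ∩ {y | a ≤ (y : ℕ)}) i = prefixCount s i - prefixCount s a := by
  rcases le_or_gt a i with h | h
  · have hsplit : s ∩ {y | (y : ℕ) < i} =
        (s ∩ {y | (y : ℕ) < a}) ∪ (s ∩ {y | a ≤ (y : ℕ)} ∩ {y | (y : ℕ) < i}) := by
      ext y
      simp only [Set.mem_inter_iff, Set.mem_union, Set.mem_ofPred_eq]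
      grind
    have hdisj : Disjoint (s ∩ {y | (y : ℕ) < a}) (s ∩ {y | a ≤ (y : ℕ)} ∩ {y | (y : ℕ) < i}) :=
      Set.disjoint_left.2 fun y hy hy' => absurd hy'.1.2 (not_le.2 hy.2 : ¬ a ≤ (y : ℕ))
    rw [prefixCount_eq_ncard, prefixCount_eq_ncard, prefixCount_eq_ncard, hsplit,
      Set.ncard_union_eq hdisj, Nat.add_sub_cancel_left]
  · have hempty : s ∩ {y | a ≤ (y : ℕ)} ∩ {y | (y : ℕ) < i} = ∅ :=
      Set.eq_empty_of_forall_notMem fun y hy => absurd (hy.1.2.trans_lt hy.2) (not_lt.2 h.le)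
    rw [prefixCount_eq_ncard, hempty, Set.ncard_empty,
      Nat.sub_eq_zero_of_le (prefixCount_mono s h.le)]

theorem exists_mem_prefixCount_eq {k m : ℕ} (hk : k < prefixCount s m) :
    ∃ x ∈ s, prefixCount s x = k := by
  induction m with
  | zero => simp [prefixCount] at hk
  | succ m ih =>
    rcases lt_or_ge k (prefixCount s m) with h | h
    · exact ih h
    · have hm : m ∈ Fin.val '' s := by
        by_contra hm
        rw [prefixCount, Nat.count_succ, if_neg hm] at hk
        exact absurd hk (by simpa [prefixCount] using h)
      obtain ⟨x, hx, rfl⟩ := hm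
      rw [prefixCount, Nat.count_succ, if_pos (Fin.val_injective.mem_set_image.2 hx)] at hk
      exact ⟨x, hx, le_antisymm h (Nat.lt_succ_iff.1 hk)⟩

end prefixCount

section perm

variable {n : ℕ}

theorem prefixCount_coe_eq_ncard_Iio {s : Set (Fin n)} (x : s) :
    prefixCount s x = (Set.Iio x).ncard := by
  rw [prefixCount_eq_ncard, ← Set.ncard_image_of_injective _ Subtype.val_injective]
  congr 1
  ext y
  constructor
  · rintro ⟨hy, hyx⟩
    exact ⟨⟨y, hy⟩, hyx, rfl⟩
  · rintro ⟨y, hyx, rfl⟩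
    exact ⟨y.2, hyx⟩

theorem exists_equiv_prefixCount_eq {s t : Set (Fin n)} (h : s.ncard = t.ncard) :
    ∃ e : s ≃ t, ∀ x, prefixCount t (e x) = prefixCount s x := by
  classical
  have hcard : Fintype.card t = Fintype.card s := by
    rw [Fintype.card_eq_nat_card, Fintype.card_eq_nat_card, Nat.card_coe_set_eq,
      Nat.card_coe_set_eq, h]
  let e : s ≃o t := (Fintype.orderIsoFinOfCardEq s rfl).symm.trans
    (Fintype.orderIsoFinOfCardEq t hcard)
  refine ⟨e.toEquiv, fun x => ?_⟩
  rw [prefixCount_coe_eq_ncard_Iio, prefixCount_coe_eq_ncard_Iio]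
  exact (e.image_Iio x).symm ▸ Set.ncard_image_of_injective _ e.injective

/-- The permutation sending the `k`-th element of `s` to the `k`-th element of `t`, and the
`k`-th element of `sᶜ` to the `k`-th element of `tᶜ`. -/
theorem exists_perm_prefixCount_eq {s t : Set (Fin n)} (h : s.ncard = t.ncard) :
    ∃ σ : Equiv.Perm (Fin n), ∀ x,
      (x ∈ s → σ x ∈ t ∧ prefixCount t (σ x) = prefixCount s x) ∧
      (x ∉ s → σ x ∉ t ∧ prefixCount tᶜ (σ x) = prefixCount sᶜ x) := by
  classical
  obtain ⟨e, he⟩ := exists_equiv_prefixCount_eq h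
  obtain ⟨f, hf⟩ := exists_equiv_prefixCount_eq (s := sᶜ) (t := tᶜ)
    (by rw [Set.ncard_compl, Set.ncard_compl, h])
  refine ⟨Equiv.subtypeCongr e f, fun x => ⟨fun hx => ?_, fun hx => ?_⟩⟩
  · have hσ : Equiv.subtypeCongr e f x = e ⟨x, hx⟩ := by
      simp [Equiv.subtypeCongr, Equiv.sumCompl_symm_apply_of_pos hx]
    exact hσ ▸ ⟨(e ⟨x, hx⟩).2, he ⟨x, hx⟩⟩
  · have hσ : Equiv.subtypeCongr e f x = f ⟨x, hx⟩ := by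
      simp [Equiv.subtypeCongr, Equiv.sumCompl_symm_apply_of_neg hx]
    exact hσ ▸ ⟨(f ⟨x, hx⟩).2, hf ⟨x, hx⟩⟩

end perm

section matRk

variable {α : Type*} [Finite α]

theorem matRk_eq_eRk (M : Matroid α) (X : Set α) : (matRk M X : ℕ∞) = M.eRk X := by
  set S := {k : ℕ | ∃ I : Set α, I ⊆ X ∧ M.Indep I ∧ I.ncard = k}
  have hbdd : BddAbove S := ⟨Nat.card α, by rintro _ ⟨I, -, -, rfl⟩; exact Set.ncard_le_card I⟩
  apply le_antisymm
  · obtain ⟨I, hIX, hI, hcard⟩ : matRk M X ∈ S :=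
      Nat.sSup_mem ⟨0, ∅, Set.empty_subset X, M.empty_indep, Set.ncard_empty α⟩ hbdd
    rw [← hcard, (Set.toFinite I).cast_ncard_eq]
    exact hI.encard_le_eRk_of_subset hIX
  · refine Matroid.eRk_le_iff.2 fun I hIX hI => ?_
    rw [← (Set.toFinite I).cast_ncard_eq, Nat.cast_le]
    exact le_csSup hbdd ⟨I, hIX, hI, rfl⟩

theorem Matroid.Indep.ncard_le_matRk {M : Matroid α} {I X : Set α} (hI : M.Indep I)
    (hIX : I ⊆ X) : I.ncard ≤ matRk M X := by
  rw [← Nat.cast_le (α := ℕ∞), matRk_eq_eRk, (Set.toFinite I).cast_ncard_eq]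
  exact hI.encard_le_eRk_of_subset hIX

theorem matRk_le_iff {M : Matroid α} {X : Set α} {k : ℕ} :
    matRk M X ≤ k ↔ ∀ I ⊆ X, M.Indep I → I.ncard ≤ k := by
  rw [← Nat.cast_le (α := ℕ∞), matRk_eq_eRk, Matroid.eRk_le_iff]
  refine forall_congr' fun I => ?_
  rw [← (Set.toFinite I).cast_ncard_eq, Nat.cast_le]

theorem matRk_empty (M : Matroid α) : matRk M ∅ = 0 := by
  rw [← Nat.cast_inj (R := ℕ∞), matRk_eq_eRk, Matroid.eRk_empty, Nat.cast_zero]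

theorem matRk_mono (M : Matroid α) : Monotone (matRk M) := fun X Y h => by
  rw [← Nat.cast_le (α := ℕ∞), matRk_eq_eRk, matRk_eq_eRk]
  exact M.eRk_mono h

theorem matRk_insert_le (M : Matroid α) (e : α) (X : Set α) :
    matRk M (insert e X) ≤ matRk M X + 1 := by
  rw [← Nat.cast_le (α := ℕ∞), Nat.cast_add, matRk_eq_eRk, matRk_eq_eRk, Nat.cast_one]
  exact M.eRk_insert_le_add_one e X

end matRk

theorem mem_ones {n : ℕ} {w : Fin n → Bool} {x : Fin n} : x ∈ ones w ↔ w x = true := by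
  simp [ones]

section lam

variable {n : ℕ} (M : Matroid (Fin n)) (σ : Equiv.Perm (Fin n))

theorem lam_apply_eq_true_iff (x : Fin n) :
    lam M σ x = true ↔
      matRk M (σ '' {j : Fin n | (j : ℕ) < x}) < matRk M (σ '' {j : Fin n | (j : ℕ) < x + 1}) := by
  have hle : {j : Fin n | j ≤ x} = {j : Fin n | (j : ℕ) < x + 1} := by
    ext j
    exact Fin.le_def.trans Nat.lt_succ_iff.symm
  rw [lam, hle, decide_eq_true_iff]
  rfl

theorem matRk_image_prefix_succ_eq_or (x : Fin n) :
    matRk M (σ '' {j : Fin n | (j : ℕ) < x + 1}) = matRk M (σ '' {j : Fin n | (j : ℕ) < x}) ∨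
      matRk M (σ '' {j : Fin n | (j : ℕ) < x + 1}) =
        matRk M (σ '' {j : Fin n | (j : ℕ) < x}) + 1 := by
  have hins : {j : Fin n | (j : ℕ) < x + 1} = insert x {j : Fin n | (j : ℕ) < x} := by
    ext j
    simp only [Set.mem_ofPred_eq, Set.mem_insert_iff, Fin.ext_iff]
    omega
  have h1 := matRk_mono M (Set.image_mono (f := σ) (hins ▸ Set.subset_insert x _))
  have h2 := matRk_insert_le M (σ x) (σ '' {j : Fin n | (j : ℕ) < x})
  rw [← Set.image_insert_eq, ← hins] at h2
  omega

theorem lam_eq_iff (w : Fin n → Bool) :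
    lam M σ = w ↔
      ∀ i ≤ n, matRk M (σ '' {j : Fin n | (j : ℕ) < i}) = prefixCount (ones w : Set (Fin n)) i := by
  constructor
  · rintro rfl i hi
    induction i with
    | zero => simp [matRk_empty, prefixCount]
    | succ i ih =>
      let x : Fin n := ⟨i, hi⟩
      have hones := (prefixCount_lt_succ_iff (s := (ones (lam M σ) : Set (Fin n))) (x := x)).trans
        (Finset.mem_coe.trans mem_ones)
      rw [lam_apply_eq_true_iff] at hones
      have h0 := prefixCount_mono (ones (lam M σ) : Set (Fin n)) (Nat.le_add_right i 1)
      have h1 := prefixCount_le_add_sub (ones (lam M σ) : Set (Fin n)) i (i + 1)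
      have h2 := matRk_image_prefix_succ_eq_or M σ x
      have h3 := ih (Nat.le_of_succ_le hi)
      simp only [x] at *
      grind
  · intro h
    funext x
    rw [Bool.eq_iff_iff, lam_apply_eq_true_iff, h x x.2.le, h (x + 1) x.2,
      prefixCount_lt_succ_iff, Finset.mem_coe, mem_ones]

end lam

section dominated

variable {n : ℕ} {A B : Set (Fin n)} {M : Matroid (Fin n)}
theorem matRk_le_prefixCount (hM : ∀ I, M.Indep I ↔ ∀ i, prefixCount I i ≤ prefixCount B i)
    {Y : Set (Fin n)} {x : ℕ} (hY : Y ⊆ {y | (y : ℕ) < x}) : matRk M Y ≤ prefixCount B x := by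
  refine matRk_le_iff.2 fun J hJY hJ => ?_
  calc J.ncard = prefixCount J x := by
        rw [prefixCount_eq_ncard, Set.inter_eq_left.2 (hJY.trans hY)]
    _ ≤ prefixCount B x := (hM J).1 hJ x

/-- The top `prefixCount B |X|` elements of `X` are independent. -/
theorem prefixCount_ncard_le_matRk (hM : ∀ I, M.Indep I ↔ ∀ i, prefixCount I i ≤ prefixCount B i)
    (X : Set (Fin n)) : prefixCount B X.ncard ≤ matRk M X := by
  obtain ⟨c, hc⟩ : ∃ c, prefixCount B X.ncard = c := ⟨_, rfl⟩
  rcases Nat.eq_zero_or_pos c with hc0 | hc0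
  · exact hc ▸ hc0 ▸ Nat.zero_le _
  have hcX : c ≤ X.ncard := hc ▸ prefixCount_le B _
  obtain ⟨x, -, hx⟩ : ∃ x ∈ X, prefixCount X x = X.ncard - c :=
    exists_mem_prefixCount_eq (m := n) (by rw [prefixCount_of_le le_rfl]; omega)
  have hIcount : ∀ i, prefixCount (X ∩ {y | (x : ℕ) ≤ y}) i = prefixCount X i - (X.ncard - c) :=
    fun i => by rw [prefixCount_inter_le_val, hx]
  have hIcard : (X ∩ {y | (x : ℕ) ≤ y}).ncard = c := by
    rw [← prefixCount_of_le le_rfl, hIcount, prefixCount_of_le le_rfl]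
    omega
  have hI : M.Indep (X ∩ {y | (x : ℕ) ≤ y}) := (hM _).2 fun i => by
    have := prefixCount_le_add_sub B i X.ncard
    have := prefixCount_le X i
    have := prefixCount_le_ncard X i
    rw [hIcount]
    omega
  exact hc ▸ hIcard ▸ Matroid.Indep.ncard_le_matRk hI Set.inter_subset_left

/-- The `σ`-image of the first `i` positions lies below the `(c_A(i)+1)`-st element of `B`. -/
theorem matRk_image_prefix_le (hM : ∀ I, M.Indep I ↔ ∀ i, prefixCount I i ≤ prefixCount B i)
    (hle : ∀ i, prefixCount B i ≤ prefixCount A i) {σ : Equiv.Perm (Fin n)}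
    (hσ : ∀ x, (x ∈ A → σ x ∈ B ∧ prefixCount B (σ x) = prefixCount A x) ∧
      (x ∉ A → σ x ∉ B ∧ prefixCount Bᶜ (σ x) = prefixCount Aᶜ x))
    {i : ℕ} (hi : i ≤ n) : matRk M (σ '' {j | (j : ℕ) < i}) ≤ prefixCount A i := by
  rcases lt_or_ge (prefixCount A i) B.ncard with hm | hm
  · obtain ⟨x, hxB, hx⟩ :=
      exists_mem_prefixCount_eq (s := B) (m := n) (by rwa [prefixCount_of_le le_rfl])
    have hix : i ≤ x := by
      by_contra! h
      have := prefixCount_lt_of_mem hxB h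
      have := hle i
      omega
    refine hx ▸ matRk_le_prefixCount hM ?_
    rintro _ ⟨j, hj, rfl⟩
    by_cases hjA : j ∈ A
    · obtain ⟨-, hcnt⟩ := (hσ j).1 hjA
      exact lt_of_prefixCount_lt (hcnt ▸ hx ▸ prefixCount_lt_of_mem hjA hj)
    · obtain ⟨-, hcnt⟩ := (hσ j).2 hjA
      apply lt_of_prefixCount_lt (s := Bᶜ)
      have := prefixCount_lt_of_mem (s := Aᶜ) hjA hj
      have := prefixCount_compl_add (s := A) hi
      have := prefixCount_compl_add (s := B) x.2.le
      omega
  · calc matRk M (σ '' {j | (j : ℕ) < i}) ≤ prefixCount B n :=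
          matRk_le_prefixCount hM fun y _ => y.2
      _ ≤ prefixCount A i := by rwa [prefixCount_of_le le_rfl]

theorem exists_perm_matRk_image_prefix_eq
    (hM : ∀ I, M.Indep I ↔ ∀ i, prefixCount I i ≤ prefixCount B i)
    (hcard : A.ncard = B.ncard) (hle : ∀ i, prefixCount B i ≤ prefixCount A i) :
    ∃ σ : Equiv.Perm (Fin n), ∀ i ≤ n, matRk M (σ '' {j | (j : ℕ) < i}) = prefixCount A i := by
  obtain ⟨σ, hσ⟩ := exists_perm_prefixCount_eq hcard
  refine ⟨σ, fun i hi => le_antisymm (matRk_image_prefix_le hM hle hσ hi) ?_⟩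
  have hIB : σ '' (A ∩ {j | (j : ℕ) < i}) ⊆ B := by
    rintro _ ⟨j, hj, rfl⟩
    exact ((hσ j).1 hj.1).1
  have hI : M.Indep (σ '' (A ∩ {j | (j : ℕ) < i})) :=
    (hM _).2 fun k => prefixCount_le_of_subset hIB k
  calc prefixCount A i = (σ '' (A ∩ {j | (j : ℕ) < i})).ncard := by
        rw [prefixCount_eq_ncard, Set.ncard_image_of_injective _ σ.injective]
    _ ≤ matRk M (σ '' {j | (j : ℕ) < i}) :=
        Matroid.Indep.ncard_le_matRk hI (Set.image_mono Set.inter_subset_right)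

end dominated

section word

variable {n : ℕ}

theorem prefixCount_orderEmbOfFin (s : Finset (Fin n)) {k : ℕ} (h : s.card = k) (j : Fin k) :
    prefixCount (s : Set (Fin n)) (s.orderEmbOfFin h j) = j := by
  have himage : (s : Set (Fin n)) ∩ {x | (x : ℕ) < s.orderEmbOfFin h j} =
      s.orderEmbOfFin h '' Set.Iio j := by
    ext x
    constructor
    · rintro ⟨hx, hlt⟩
      obtain ⟨i, rfl⟩ : x ∈ Set.range (s.orderEmbOfFin h) := by
        rwa [Finset.range_orderEmbOfFin]
      exact ⟨i, (s.orderEmbOfFin h).lt_iff_lt.1 hlt, rfl⟩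
    · rintro ⟨i, hi, rfl⟩
      exact ⟨s.orderEmbOfFin_mem h i, (s.orderEmbOfFin h).lt_iff_lt.2 hi⟩
  rw [prefixCount_eq_ncard, himage, Set.ncard_image_of_injective _ (s.orderEmbOfFin h).injective,
    Set.ncard_eq_toFinset_card', Set.toFinset_Iio, Fin.card_Iio]

theorem orderEmbOfFin_lt_iff (s : Finset (Fin n)) {k : ℕ} (h : s.card = k) (j : Fin k) (i : ℕ) :
    (s.orderEmbOfFin h j : ℕ) < i ↔ (j : ℕ) < prefixCount (s : Set (Fin n)) i := by
  rw [← prefixCount_orderEmbOfFin s h j]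
  exact ⟨prefixCount_lt_of_mem (s.orderEmbOfFin_mem h j), lt_of_prefixCount_lt⟩

theorem wordLE_iff {w v : Fin n → Bool} :
    wordLE w v ↔ (ones w).card = (ones v).card ∧
      ∀ i, prefixCount (ones v : Set (Fin n)) i ≤ prefixCount (ones w : Set (Fin n)) i := by
  refine and_congr_right fun hcard => ⟨fun hle i => ?_, fun hle k hkw hkv => ?_⟩
  · by_contra! hlt
    have hkv : prefixCount (ones w : Set (Fin n)) i < (ones v).card :=
      hlt.trans_le ((prefixCount_le_ncard _ i).trans (Set.ncard_coe_finset _).le)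
    have hv := (orderEmbOfFin_lt_iff (ones v) rfl ⟨_, hkv⟩ i).2 hlt
    have hw := (orderEmbOfFin_lt_iff (ones w) rfl ⟨_, hcard ▸ hkv⟩ i).1
      ((Fin.le_def.1 (hle _ (hcard ▸ hkv) hkv)).trans_lt hv)
    exact lt_irrefl _ hw
  · by_contra! hlt
    have hv := (orderEmbOfFin_lt_iff (ones v) rfl ⟨k, hkv⟩ _).1
      (Nat.lt_succ_self ((ones v).orderEmbOfFin rfl ⟨k, hkv⟩ : ℕ))
    have hw := (orderEmbOfFin_lt_iff (ones w) rfl ⟨k, hkw⟩ _).2 (hv.trans_le (hle _))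
    exact absurd (Nat.lt_succ_iff.1 hw) (not_le.2 (Fin.lt_def.1 hlt))

theorem prefix_subset_flagOfWord (v : Fin n → Bool) (i : ℕ) :
    {x : Fin n | (x : ℕ) < i} ⊆ flagOfWord v (prefixCount (ones v : Set (Fin n)) i) := by
  rw [flagOfWord]
  split_ifs with h
  · intro x hx
    show x < _
    by_contra! hle
    exact lt_irrefl _
      ((orderEmbOfFin_lt_iff (ones v) rfl ⟨_, h⟩ i).1 ((Fin.le_def.1 hle).trans_lt hx))
  · exact Set.subset_univ _

theorem exists_flagOfWord_eq {v : Fin n → Bool} {k : ℕ} (hk : k ≤ (ones v).card) :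
    ∃ t, flagOfWord v k = {x : Fin n | (x : ℕ) < t} ∧ prefixCount (ones v : Set (Fin n)) t = k := by
  rcases hk.lt_or_eq with hk | rfl
  · exact ⟨_, dif_pos hk, prefixCount_orderEmbOfFin (ones v) rfl ⟨k, hk⟩⟩
  · refine ⟨n, ?_, by rw [prefixCount_of_le le_rfl, Set.ncard_coe_finset]⟩
    rw [flagOfWord, dif_neg (lt_irrefl _)]
    exact (Set.eq_univ_of_forall fun x => x.2).symm

end word

section freedom

variable {n : ℕ} {v : Fin n → Bool} {M : Matroid (Fin n)}

theorem indep_iff_prefixCount_le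
    (hM : ∀ I : Set (Fin n), M.Indep I ↔ ∀ i ≤ (ones v).card, (I ∩ flagOfWord v i).ncard ≤ i)
    (I : Set (Fin n)) :
    M.Indep I ↔ ∀ i, prefixCount I i ≤ prefixCount (ones v : Set (Fin n)) i := by
  rw [hM]
  refine ⟨fun h i => ?_, fun h k hk => ?_⟩
  · calc prefixCount I i ≤ (I ∩ flagOfWord v (prefixCount (ones v : Set (Fin n)) i)).ncard := by
          rw [prefixCount_eq_ncard]
          exact Set.ncard_le_ncard (Set.inter_subset_inter_right _ (prefix_subset_flagOfWord v i))
      _ ≤ _ := h _ ((prefixCount_le_ncard _ i).trans (Set.ncard_coe_finset _).le)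
  · obtain ⟨t, hflag, ht⟩ := exists_flagOfWord_eq hk
    rw [hflag, ← prefixCount_eq_ncard, ← ht]
    exact h t

theorem exists_lam_eq_iff_wordLE
    (hM : ∀ I : Set (Fin n), M.Indep I ↔ ∀ i ≤ (ones v).card, (I ∩ flagOfWord v i).ncard ≤ i)
    (w : Fin n → Bool) : (∃ σ, lam M σ = w) ↔ wordLE w v := by
  have hM' := indep_iff_prefixCount_le hM
  simp only [lam_eq_iff, wordLE_iff]
  constructor
  · rintro ⟨σ, hσ⟩
    have hle : ∀ i ≤ n,
        prefixCount (ones v : Set (Fin n)) i ≤ prefixCount (ones w : Set (Fin n)) i := by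
      intro i hi
      have h := prefixCount_ncard_le_matRk hM' (σ '' {j : Fin n | (j : ℕ) < i})
      rwa [Set.ncard_image_of_injective _ σ.injective, Fin.ncard_setOf_val_lt hi, hσ i hi] at h
    have hcard : (ones w).card = (ones v).card := by
      have h := matRk_le_prefixCount hM' (Y := σ '' {j : Fin n | (j : ℕ) < n}) (x := n)
        (fun y _ => y.2)
      rw [hσ n le_rfl] at h
      have := hle n le_rfl
      simp only [prefixCount_of_le le_rfl, Set.ncard_coe_finset] at h this
      omega
    refine ⟨hcard, fun i => ?_⟩
    rcases le_total i n with hi | hi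
    · exact hle i hi
    · rw [prefixCount_of_le hi, prefixCount_of_le hi, Set.ncard_coe_finset, Set.ncard_coe_finset,
        hcard]
  · rintro ⟨hcard, hle⟩
    exact exists_perm_matRk_image_prefix_eq hM' (by simpa using hcard) hle

end freedom

theorem Matrix.det_eq_prod_diag_of_blockTriangular_injective {m R α : Type*} [Fintype m]
    [DecidableEq m] [CommRing R] [LinearOrder α] {M : Matrix m m R} {b : m → α}
    (hb : Function.Injective b) (h : M.BlockTriangular b) : M.det = ∏ i, M i i := by
  let _ : LinearOrder m := LinearOrder.lift' b hb
  convert Matrix.det_of_isUpperTriangular (M := M) h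

theorem eq_of_prefixCount_ones_eq {n : ℕ} {w v : Fin n → Bool}
    (h : prefixCount (ones w : Set (Fin n)) = prefixCount (ones v : Set (Fin n))) : w = v := by
  funext x
  rw [Bool.eq_iff_iff, ← mem_ones, ← mem_ones, ← Finset.mem_coe, ← Finset.mem_coe,
    ← prefixCount_lt_succ_iff, ← prefixCount_lt_succ_iff, h]

theorem freedom_section_matrix_invertible_general {n r : ℕ}
    (Mfam : (Fin n → Bool) → Matroid (Fin n))
    (hInd : ∀ w, ∀ I : Set (Fin n),
      (Mfam w).Indep I ↔ ∀ i ≤ (ones w).card, (I ∩ flagOfWord w i).ncard ≤ i)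
    (C : Matrix {w : Fin n → Bool // (ones w).card = r}
               {w : Fin n → Bool // (ones w).card = r} ℚ)
    (hC : ∀ w v, C w v =
      ({σ : Equiv.Perm (Fin n) | lam (Mfam v.1) σ = w.1}.ncard : ℚ)) :
    (∀ w v, C w v ≠ 0 ↔ wordLE w.1 v.1) ∧ IsUnit C.det := by
  have hsupp : ∀ w v, C w v ≠ 0 ↔ wordLE w.1 v.1 := fun w v => by
    rw [hC, Ne, Nat.cast_eq_zero, Set.ncard_eq_zero (Set.toFinite _), ← Ne,
      ← Set.nonempty_iff_ne_empty]
    exact exists_lam_eq_iff_wordLE (hInd v.1) w.1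
  refine ⟨hsupp, ?_⟩
  let b : {w : Fin n → Bool // (ones w).card = r} → (Lex (ℕ → ℕ))ᵒᵈ :=
    fun w => OrderDual.toDual (toLex (prefixCount (ones w.1 : Set (Fin n))))
  have hb : Function.Injective b := fun w v h =>
    Subtype.ext (eq_of_prefixCount_ones_eq (toLex.injective (OrderDual.toDual.injective h)))
  have htri : C.BlockTriangular b := fun w v hvw => by
    by_contra hne
    exact not_le.2 hvw (Pi.toLex_monotone ((wordLE_iff.1 ((hsupp w v).1 hne)).2))
  rw [Matrix.det_eq_prod_diag_of_blockTriangular_injective hb htri, isUnit_iff_ne_zero,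
    Finset.prod_ne_zero_iff]
  exact fun w _ => (hsupp w w).2 (wordLE_iff.2 ⟨rfl, fun _ => le_rfl⟩)

/-- For `n ≥ r ≥ 0`, let `C` be the square matrix over `ℚ` indexed by
`W(n,r)` whose `(w,v)` entry is `c(w,v) = #{ σ ∈ S_n : λ_{M_v}(σ) = w }`, where `M_v`
is the freedom matroid of the word `v`.  Then `c(w,v) ≠ 0` iff `w ≤ v` in `W(n,r)`,
and the matrix `C` is invertible. -/
theorem freedom_section_matrix_invertible {n r : ℕ} (hrn : r ≤ n)
    (Mfam : (Fin n → Bool) → Matroid (Fin n))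
    (hE : ∀ w, (Mfam w).E = Set.univ)
    (hInd : ∀ w, ∀ I : Set (Fin n),
      (Mfam w).Indep I ↔ ∀ i ≤ (ones w).card, (I ∩ flagOfWord w i).ncard ≤ i)
    (C : Matrix {w : Fin n → Bool // (ones w).card = r}
               {w : Fin n → Bool // (ones w).card = r} ℚ)
    (hC : ∀ w v, C w v =
      ({σ : Equiv.Perm (Fin n) | lam (Mfam v.1) σ = w.1}.ncard : ℚ)) :
    (∀ w v, C w v ≠ 0 ↔ wordLE w.1 v.1) ∧ IsUnit C.det :=
  freedom_section_matrix_invertible_general Mfam hInd C hC
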